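/- Dual certificate lemma for ℓ1 minimization: Let A ∈ R^{n×N}, a ∈ R^n, and let T be a subset of column indices of A. Suppose there exists c ∈ R^N with a = Ac whose support S is contained in T, and a vector v ∈ R^n satisfying (i) A_Sᵀ v = sign(c_S), (ii) ‖A_{T∩S^c}ᵀ v‖_∞ ≤ 1, and (iii) ‖A_{T^c}ᵀ v‖_∞ < 1. Then every minimizer c* of min ‖x‖_1 subject to a = Ax satisfies c*_j = 0 for all j ∉ T. -/

import Mathlib

/-!
With `g := v ᵥ* A` (the vector `Aᵀ v`), the certificate gives `|g j| ≤ 1` for every `j`, with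
`g j = sign (c j)` on the support of `c` and `|g j| < 1` off `T`. Since `A (c* - c) = 0`,
`g ⬝ᵥ c* = v ⬝ᵥ a = g ⬝ᵥ c = ‖c‖₁ ≥ ‖c*‖₁`. But `g j * c* j ≤ |c* j|` for each `j`, so all these
inequalities are equalities, which forces `c* j = 0` wherever `|g j| < 1`.
-/

open Matrix

lemma Real.sign_mul_self (r : ℝ) : Real.sign r * r = |r| := by
  rcases lt_trichotomy r 0 with hr | rfl | hr
  · rw [Real.sign_of_neg hr, abs_of_neg hr, neg_one_mul]
  · simp
  · rw [Real.sign_of_pos hr, abs_of_pos hr, one_mul]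

lemma Real.abs_sign_le_one (r : ℝ) : |Real.sign r| ≤ 1 := by
  rcases Real.sign_apply_eq r with h | h | h <;> simp [h]

section

variable {ι : Type*} [Fintype ι]

lemma dotProduct_eq_sum_abs_of_sign {g c : ι → ℝ} (hg : ∀ j, c j ≠ 0 → g j = Real.sign (c j)) :
    g ⬝ᵥ c = ∑ j, |c j| := by
  refine Finset.sum_congr rfl fun j _ => ?_
  by_cases hcj : c j = 0
  · simp [hcj]
  · rw [hg j hcj, Real.sign_mul_self]

lemma mul_le_abs_of_abs_le_one {s x : ℝ} (hs : |s| ≤ 1) : s * x ≤ |x| :=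
  calc s * x ≤ |s * x| := le_abs_self _
    _ = |s| * |x| := abs_mul _ _
    _ ≤ |x| := mul_le_of_le_one_left (abs_nonneg x) hs

lemma eq_zero_of_sum_abs_le_dotProduct {g x : ι → ℝ} (hg : ∀ j, |g j| ≤ 1)
    (hx : ∑ j, |x j| ≤ g ⬝ᵥ x) {j : ι} (hj : |g j| < 1) : x j = 0 := by
  have slack_nonneg : ∀ k, 0 ≤ |x k| - g k * x k := fun k =>
    sub_nonneg.mpr (mul_le_abs_of_abs_le_one (hg k))
  have slack_sum : ∑ k, (|x k| - g k * x k) = 0 := by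
    refine le_antisymm ?_ (Finset.sum_nonneg fun k _ => slack_nonneg k)
    rw [Finset.sum_sub_distrib]
    exact sub_nonpos.mpr hx
  have slack_j : |x j| = g j * x j :=
    sub_eq_zero.mp ((Finset.sum_eq_zero_iff_of_nonneg fun k _ => slack_nonneg k).mp slack_sum j
      (Finset.mem_univ j))
  have : |x j| ≤ |g j| * |x j| := slack_j.trans_le ((le_abs_self _).trans (abs_mul _ _).le)
  by_contra hxj
  have := abs_pos.mpr hxj
  nlinarith

end

theorem stmt3_general {n N : ℕ} (A : Matrix (Fin n) (Fin N) ℝ) (a : Fin n → ℝ)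
    (T : Set (Fin N)) (c : Fin N → ℝ) (hc : A.mulVec c = a)
    (v : Fin n → ℝ)
    (h1 : ∀ j, c j ≠ 0 → ∑ i, A i j * v i = Real.sign (c j))
    (h2 : ∀ j ∈ T, c j = 0 → |∑ i, A i j * v i| ≤ 1)
    (h3 : ∀ j ∉ T, |∑ i, A i j * v i| < 1)
    (cstar : Fin N → ℝ) (hfeas : A.mulVec cstar = a)
    (hopt : ∀ x : Fin N → ℝ, A.mulVec x = a → ∑ j, |cstar j| ≤ ∑ j, |x j|) :
    ∀ j ∉ T, cstar j = 0 := by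
  set g := v ᵥ* A
  have hg : ∀ j, g j = ∑ i, A i j * v i := fun j => by
    simp only [g, vecMul, dotProduct, mul_comm]
  have hg_le : ∀ j, |g j| ≤ 1 := by
    intro j
    rw [hg]
    by_cases hcj : c j = 0
    · by_cases hT : j ∈ T
      · exact h2 j hT hcj
      · exact (h3 j hT).le
    · exact h1 j hcj ▸ Real.abs_sign_le_one (c j)
  have hg_c : g ⬝ᵥ c = ∑ j, |c j| :=
    dotProduct_eq_sum_abs_of_sign fun j hcj => (hg j).trans (h1 j hcj)
  have hg_cstar : g ⬝ᵥ cstar = g ⬝ᵥ c := by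
    rw [← dotProduct_mulVec, ← dotProduct_mulVec, hfeas, hc]
  intro j hj
  refine eq_zero_of_sum_abs_le_dotProduct hg_le ?_ ((hg j).symm ▸ h3 j hj)
  rw [hg_cstar, hg_c]
  exact hopt c hc

/-- Dual certificate lemma for ℓ1 minimization: if `a = A c` with support of `c`
contained in `T`, and there is a dual certificate `v`, then every ℓ1-minimizer
`c*` of `min ‖x‖₁ s.t. a = A x` vanishes outside `T`. -/
theorem stmt3 {n N : ℕ} (A : Matrix (Fin n) (Fin N) ℝ) (a : Fin n → ℝ)
    (T : Set (Fin N)) (c : Fin N → ℝ) (hc : A.mulVec c = a)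
    (hsupp : ∀ j, c j ≠ 0 → j ∈ T)
    (v : Fin n → ℝ)
    (h1 : ∀ j, c j ≠ 0 → ∑ i, A i j * v i = Real.sign (c j))
    (h2 : ∀ j ∈ T, c j = 0 → |∑ i, A i j * v i| ≤ 1)
    (h3 : ∀ j ∉ T, |∑ i, A i j * v i| < 1)
    (cstar : Fin N → ℝ) (hfeas : A.mulVec cstar = a)
    (hopt : ∀ x : Fin N → ℝ, A.mulVec x = a → ∑ j, |cstar j| ≤ ∑ j, |x j|) :
    ∀ j ∉ T, cstar j = 0 :=
  stmt3_general A a T c hc v h1 h2 h3 cstar hfeas hopt
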